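/- Let ρ_1, ρ_2 ∈ (0,1) with ρ_1 + ρ_2 = 1 and let ψ_4(σ) := σ⁴ − 1 − 4(σ − 1). Set μ̃ := 2 − 2√(1 − 3 ρ_2 (1 − ρ_2)) > 0. Then for all u_1, u_2 ∈ [0,1] with u_1 + u_2 = 1: Σ_{j=1}^2 ψ_4''(u_j/ρ_j) (1/ρ_j) (ρ_j − u_j)² ≥ μ̃ · Σ_{j=1}^2 ψ_4'(u_j/ρ_j) (u_j − ρ_j). Moreover μ̃ ≤ 1, with μ̃ = 1 exactly when ρ_2 = 1/2. -/

import Mathlib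

open Real Set

/-!
Writing `ψ₄'(σ) = 4(σ³ - 1)` and `ψ₄''(σ) = 12σ²`, each coordinate of
`Σ ψ₄''(uⱼ/ρⱼ)(ρⱼ - uⱼ)²/ρⱼ - μ Σ ψ₄'(uⱼ/ρⱼ)(uⱼ - ρⱼ)` carries the factor `(uⱼ - ρⱼ)²`.
As `u₁ - ρ₁ = ρ₂ - u₂ =: d`, the difference is `4d²/(ρ₁ρ₂)³` times a quadratic in `d`,
which is nonnegative as soon as its discriminant is not positive, i.e. as soon as
`3(2 - μ)²(ρ₂ - ρ₁)² ≤ 4(1 - μ)(3 - μ)(1 - 3ρ₁ρ₂)`. Since `(ρ₂ - ρ₁)² = 1 - 4ρ₁ρ₂`, this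
holds with equality at `μ̃ = 2 - 2√(1 - 3ρ₁ρ₂)`, the largest admissible `μ < 3`.
-/

theorem quadratic_nonneg_of_discrim_nonpos {K : Type*} [CommRing K] [LinearOrder K]
    [IsStrictOrderedRing K] {a b c : K} (ha : 0 < a) (h : discrim a b c ≤ 0)
    (x : K) : 0 ≤ a * (x * x) + b * x + c := by
  have key : 4 * a * (a * (x * x) + b * x + c) = (2 * a * x + b) ^ 2 - discrim a b c := by
    rw [discrim]; ring
  nlinarith [sq_nonneg (2 * a * x + b)]

theorem quartic_admissibility_gap {p q μ u₁ u₂ : ℝ} (hp : p ≠ 0) (hq : q ≠ 0) (hpq : p + q = 1)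
    (hu : u₁ + u₂ = 1) :
    12 * (u₁ / p) ^ 2 * (1 / p) * (p - u₁) ^ 2 + 12 * (u₂ / q) ^ 2 * (1 / q) * (q - u₂) ^ 2
      - μ * (4 * ((u₁ / p) ^ 3 - 1) * (u₁ - p) + 4 * ((u₂ / q) ^ 3 - 1) * (u₂ - q))
      = 4 * (u₁ - p) ^ 2 / (p * q) ^ 3 *
        ((3 - μ) * (1 - 3 * p * q) * ((u₁ - p) * (u₁ - p))
          + 3 * (2 - μ) * (p * q) * (q - p) * (u₁ - p) + 3 * (1 - μ) * (p * q) ^ 2) := by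
  obtain rfl : q = 1 - p := by linarith
  obtain rfl : u₂ = 1 - u₁ := by linarith
  field_simp
  ring

theorem quartic_admissible {p q μ : ℝ} (hp : 0 < p) (hq : 0 < q) (hpq : p + q = 1) (hμ : μ < 3)
    (hdisc : 3 * (2 - μ) ^ 2 * (q - p) ^ 2 ≤ 4 * (1 - μ) * (3 - μ) * (1 - 3 * p * q))
    {u₁ u₂ : ℝ} (hu : u₁ + u₂ = 1) :
    μ * (4 * ((u₁ / p) ^ 3 - 1) * (u₁ - p) + 4 * ((u₂ / q) ^ 3 - 1) * (u₂ - q)) ≤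
      12 * (u₁ / p) ^ 2 * (1 / p) * (p - u₁) ^ 2 + 12 * (u₂ / q) ^ 2 * (1 / q) * (q - u₂) ^ 2 := by
  have hpq_le : p * q ≤ 1 / 4 := by nlinarith [sq_nonneg (p - q)]
  have hlead : 0 < (3 - μ) * (1 - 3 * p * q) := mul_pos (by linarith) (by linarith)
  have hdiscrim : discrim ((3 - μ) * (1 - 3 * p * q)) (3 * (2 - μ) * (p * q) * (q - p))
      (3 * (1 - μ) * (p * q) ^ 2) ≤ 0 := by
    have h := mul_le_mul_of_nonneg_left hdisc (by positivity : 0 ≤ 3 * (p * q) ^ 2)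
    rw [discrim]
    linear_combination h
  have hquad := quadratic_nonneg_of_discrim_nonpos hlead hdiscrim (u₁ - p)
  have hgap := quartic_admissibility_gap (μ := μ) hp.ne' hq.ne' hpq hu
  have hfactor : 0 ≤ 4 * (u₁ - p) ^ 2 / (p * q) ^ 3 := by positivity
  exact sub_nonneg.1 (hgap ▸ mul_nonneg hfactor hquad)

theorem quartic_discrim_eq_zero {p q s : ℝ} (hpq : p + q = 1) (hs : s ^ 2 = 1 - 3 * p * q) :
    3 * (2 - (2 - 2 * s)) ^ 2 * (q - p) ^ 2
      = 4 * (1 - (2 - 2 * s)) * (3 - (2 - 2 * s)) * (1 - 3 * p * q) := by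
  obtain rfl : q = 1 - p := by linarith
  linear_combination (-4) * hs

theorem half_le_sqrt_one_sub_three_mul_mul_one_sub (q : ℝ) : 1 / 2 ≤ √(1 - 3 * q * (1 - q)) :=
  (Real.le_sqrt (by norm_num) (by nlinarith [sq_nonneg (q - 1 / 2)])).2
    (by nlinarith [sq_nonneg (q - 1 / 2)])

theorem sqrt_one_sub_three_mul_mul_one_sub_lt_one {q : ℝ} (hq : q ∈ Ioo (0 : ℝ) 1) :
    √(1 - 3 * q * (1 - q)) < 1 :=
  (Real.sqrt_lt' one_pos).2 (by nlinarith [mul_pos hq.1 (sub_pos.2 hq.2)])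

theorem sqrt_one_sub_three_mul_mul_one_sub_eq_half_iff (q : ℝ) :
    √(1 - 3 * q * (1 - q)) = 1 / 2 ↔ q = 1 / 2 := by
  rw [Real.sqrt_eq_iff_eq_sq (by nlinarith [sq_nonneg (q - 1 / 2)]) (by norm_num)]
  constructor
  · intro h
    nlinarith [sq_nonneg (q - 1 / 2)]
  · rintro rfl
    norm_num

theorem stmt_9
    (ρ₁ ρ₂ : ℝ) (hρ₂ : ρ₂ ∈ Set.Ioo (0:ℝ) 1)
    (hρsum : ρ₁ + ρ₂ = 1)
    (μt : ℝ) (hμt : μt = 2 - 2 * Real.sqrt (1 - 3 * ρ₂ * (1 - ρ₂))) :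
    0 < μt ∧
    (∀ u₁ u₂ : ℝ, u₁ ∈ Set.Icc (0:ℝ) 1 → u₂ ∈ Set.Icc (0:ℝ) 1 → u₁ + u₂ = 1 →
      μt * ((4 * ((u₁ / ρ₁) ^ 3 - 1)) * (u₁ - ρ₁) + (4 * ((u₂ / ρ₂) ^ 3 - 1)) * (u₂ - ρ₂)) ≤
        (12 * (u₁ / ρ₁) ^ 2) * (1 / ρ₁) * (ρ₁ - u₁) ^ 2 +
          (12 * (u₂ / ρ₂) ^ 2) * (1 / ρ₂) * (ρ₂ - u₂) ^ 2) ∧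
    μt ≤ 1 ∧ (μt = 1 ↔ ρ₂ = 1/2) := by
  obtain rfl : ρ₁ = 1 - ρ₂ := by linarith
  set s := √(1 - 3 * ρ₂ * (1 - ρ₂))
  have hs_half : 1 / 2 ≤ s := half_le_sqrt_one_sub_three_mul_mul_one_sub ρ₂
  have hs_sq : s ^ 2 = 1 - 3 * (1 - ρ₂) * ρ₂ := by
    rw [Real.sq_sqrt (by nlinarith [sq_nonneg (ρ₂ - 1 / 2)])]
    ring
  subst hμt
  refine ⟨by linarith [sqrt_one_sub_three_mul_mul_one_sub_lt_one hρ₂], ?_, by linarith, ?_⟩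
  · intro u₁ u₂ _ _ hu
    exact quartic_admissible (by linarith [hρ₂.2]) hρ₂.1 (by ring) (by linarith)
      (quartic_discrim_eq_zero (by ring) hs_sq).le hu
  · rw [← sqrt_one_sub_three_mul_mul_one_sub_eq_half_iff]
    constructor <;> intro h <;> linarith
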